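/- arXiv:2602.07503 — 2 statements merged into one kernel-verified Lean document; each statement's English description precedes it below -/
import Mathlib

section
/- Let m ≥ 2 and let t be an integer with 1 ≤ t ≤ m-1. Then ((2^{2m-1} - 1)/(2^m - 1)) · ∏_{s=1}^{m} (2^{2m-1} - 2^{t+s-1})/(2^{2m} - 2^{m+s-1}) ≥ 1/2. -/
theorem completion_count_ratio_two_collision (m t : ℕ) (hm : 2 ≤ m)
    (ht1 : 1 ≤ t) (ht2 : t ≤ m - 1) :
    (((2 : ℝ) ^ (2 * m - 1) - 1) / ((2 : ℝ) ^ m - 1)) *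
      ∏ s ∈ Finset.Icc 1 m,
        (((2 : ℝ) ^ (2 * m - 1) - (2 : ℝ) ^ (t + s - 1)) /
          ((2 : ℝ) ^ (2 * m) - (2 : ℝ) ^ (m + s - 1))) ≥ 1 / 2 := by
  have hmono : ∀ a b : ℕ, a ≤ b → (2:ℝ)^a ≤ (2:ℝ)^b :=
    fun a b h => pow_le_pow_right₀ (by norm_num) h
  have hpos : ∀ a : ℕ, (0:ℝ) < 2^a := fun a => pow_pos (by norm_num) a
  have hfac : ∀ s ∈ Finset.Icc 1 m, (1/2 : ℝ) ≤
      ((2 : ℝ) ^ (2 * m - 1) - (2 : ℝ) ^ (t + s - 1)) /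
        ((2 : ℝ) ^ (2 * m) - (2 : ℝ) ^ (m + s - 1)) := by
    intro s hs
    simp only [Finset.mem_Icc] at hs
    have hD : (0:ℝ) < (2:ℝ)^(2*m) - (2:ℝ)^(m+s-1) := by
      have h1 := hmono (m+s-1) (2*m-1) (by omega)
      have h2 : (2:ℝ)^(2*m-1) < (2:ℝ)^(2*m) :=
        pow_lt_pow_right₀ (by norm_num) (by omega)
      linarith
    rw [le_div_iff₀ hD]
    have e1 : (2:ℝ)^(2*m) = 2 * (2:ℝ)^(2*m-1) := by
      rw [← pow_succ']; congr 1; omega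
    have e2 : (2:ℝ)^(t+s) = 2 * (2:ℝ)^(t+s-1) := by
      rw [← pow_succ']; congr 1; omega
    have h3 : (2:ℝ)^(t+s) ≤ (2:ℝ)^(m+s-1) := hmono _ _ (by omega)
    nlinarith [hpos (t+s-1)]
  have hprod : ((1:ℝ)/2)^m ≤ ∏ s ∈ Finset.Icc 1 m,
      (((2 : ℝ) ^ (2 * m - 1) - (2 : ℝ) ^ (t + s - 1)) /
        ((2 : ℝ) ^ (2 * m) - (2 : ℝ) ^ (m + s - 1))) := by
    have h := Finset.prod_le_prod (s := Finset.Icc 1 m)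
      (f := fun _ => (1/2:ℝ))
      (g := fun s => ((2 : ℝ) ^ (2 * m - 1) - (2 : ℝ) ^ (t + s - 1)) /
        ((2 : ℝ) ^ (2 * m) - (2 : ℝ) ^ (m + s - 1)))
      (fun i _ => by norm_num) hfac
    simpa [Nat.card_Icc] using h
  have hpre : (2:ℝ)^(m-1) ≤ ((2 : ℝ) ^ (2 * m - 1) - 1) / ((2 : ℝ) ^ m - 1) := by
    have hden : (0:ℝ) < (2:ℝ)^m - 1 := by
      have h : (2:ℝ)^0 < (2:ℝ)^m := pow_lt_pow_right₀ (by norm_num) (by omega)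
      simpa using h
    rw [le_div_iff₀ hden]
    have e : (2:ℝ)^(m-1) * (2:ℝ)^m = (2:ℝ)^(2*m-1) := by
      rw [← pow_add]; congr 1; omega
    have h1 : (1:ℝ) ≤ (2:ℝ)^(m-1) := one_le_pow₀ (by norm_num)
    nlinarith
  have hkey : (1/2:ℝ) = (2:ℝ)^(m-1) * ((1:ℝ)/2)^m := by
    have e : (2:ℝ)^m = 2 * (2:ℝ)^(m-1) := by
      rw [← pow_succ']; congr 1; omega
    rw [div_pow, one_pow, e]
    field_simp
  rw [ge_iff_le, hkey]
  exact mul_le_mul hpre hprod (by positivity)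
    (le_trans (by positivity) hpre)
end

section
/- Let k ≥ 2, m ≥ k + 2, and let t be an integer with 1 ≤ t ≤ m-k-1. Then (∏_{s=1}^{m-1} (2^{2m-s} - 1)/(2^{2m-k+1-s} - 1)) · (∏_{s=1}^{m} (2^{2m-k+1} - 2^{t+s-1})/(2^{2m} - 2^{m+s-1})) ≥ 2^{-(k-1)}. -/
theorem completion_count_ratio_k_collision (k m t : ℕ) (hk : 2 ≤ k)
    (hm : k + 2 ≤ m) (ht1 : 1 ≤ t) (ht2 : t ≤ m - k - 1) :
    (∏ s ∈ Finset.Icc 1 (m - 1),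
        (((2 : ℝ) ^ (2 * m - s) - 1) / ((2 : ℝ) ^ (2 * m - k + 1 - s) - 1))) *
      (∏ s ∈ Finset.Icc 1 m,
        (((2 : ℝ) ^ (2 * m - k + 1) - (2 : ℝ) ^ (t + s - 1)) /
          ((2 : ℝ) ^ (2 * m) - (2 : ℝ) ^ (m + s - 1)))) ≥
      ((2 : ℝ) ^ (k - 1))⁻¹ := by
  have hx : (0:ℝ) < 2 ^ (k-1) := by positivity
  have hx0 : ((2:ℝ) ^ (k-1)) ≠ 0 := ne_of_gt hx
  -- pointwise bound for first product
  have h1 : ∀ s ∈ Finset.Icc 1 (m-1),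
      (2:ℝ)^(k-1) ≤ ((2:ℝ)^(2*m-s) - 1) / ((2:ℝ)^(2*m-k+1-s) - 1) := by
    intro s hs
    rw [Finset.mem_Icc] at hs
    have hden : (0:ℝ) < (2:ℝ)^(2*m-k+1-s) - 1 := by
      have h1 : (1:ℝ) < (2:ℝ)^(2*m-k+1-s) :=
        one_lt_pow₀ (by norm_num) (by omega)
      linarith
    rw [le_div_iff₀ hden]
    have he : (k-1) + (2*m-k+1-s) = 2*m - s := by omega
    have heq : (2:ℝ)^(k-1) * ((2:ℝ)^(2*m-k+1-s) - 1)
        = (2:ℝ)^(2*m-s) - (2:ℝ)^(k-1) := by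
      rw [mul_sub, mul_one, ← pow_add, he]
    rw [heq]
    have : (1:ℝ) ≤ (2:ℝ)^(k-1) := one_le_pow₀ (by norm_num)
    linarith
  -- pointwise bound for second product
  have h2 : ∀ s ∈ Finset.Icc 1 m,
      ((2:ℝ)^(k-1))⁻¹ ≤ ((2:ℝ)^(2*m-k+1) - (2:ℝ)^(t+s-1)) /
        ((2:ℝ)^(2*m) - (2:ℝ)^(m+s-1)) := by
    intro s hs
    rw [Finset.mem_Icc] at hs
    have hden : (0:ℝ) < (2:ℝ)^(2*m) - (2:ℝ)^(m+s-1) := by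
      have : (2:ℝ)^(m+s-1) < (2:ℝ)^(2*m) :=
        pow_lt_pow_right₀ (by norm_num) (by omega)
      linarith
    rw [le_div_iff₀ hden, inv_mul_le_iff₀ hx]
    have he : (k-1) + (2*m-k+1) = 2*m := by omega
    have heq : (2:ℝ)^(k-1) * ((2:ℝ)^(2*m-k+1) - (2:ℝ)^(t+s-1))
        = (2:ℝ)^(2*m) - (2:ℝ)^((k-1)+(t+s-1)) := by
      rw [mul_sub, ← pow_add, ← pow_add, he]
    rw [heq]
    have : (2:ℝ)^((k-1)+(t+s-1)) ≤ (2:ℝ)^(m+s-1) :=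
      pow_le_pow_right₀ (by norm_num) (by omega)
    linarith
  -- product bounds
  have hp1 : ((2:ℝ)^(k-1))^(m-1) ≤
      ∏ s ∈ Finset.Icc 1 (m-1),
        (((2:ℝ)^(2*m-s) - 1) / ((2:ℝ)^(2*m-k+1-s) - 1)) := by
    calc ((2:ℝ)^(k-1))^(m-1)
        = ∏ s ∈ Finset.Icc 1 (m-1), (2:ℝ)^(k-1) := by
          rw [Finset.prod_const, Nat.card_Icc]; congr 1
      _ ≤ _ := Finset.prod_le_prod (fun i _ => le_of_lt hx) h1
  have hp2 : (((2:ℝ)^(k-1))⁻¹)^m ≤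
      ∏ s ∈ Finset.Icc 1 m,
        (((2:ℝ)^(2*m-k+1) - (2:ℝ)^(t+s-1)) /
          ((2:ℝ)^(2*m) - (2:ℝ)^(m+s-1))) := by
    calc (((2:ℝ)^(k-1))⁻¹)^m
        = ∏ s ∈ Finset.Icc 1 m, ((2:ℝ)^(k-1))⁻¹ := by
          rw [Finset.prod_const, Nat.card_Icc]; congr 1
      _ ≤ _ := Finset.prod_le_prod (fun i _ => by positivity) h2
  have hA : (0:ℝ) < ((2:ℝ)^(k-1))^(m-1) := by positivity
  have hB : (0:ℝ) < (((2:ℝ)^(k-1))⁻¹)^m := by positivity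
  have hmul : ((2:ℝ)^(k-1))^(m-1) * (((2:ℝ)^(k-1))⁻¹)^m ≤ _ :=
    mul_le_mul hp1 hp2 (le_of_lt hB) (le_trans (le_of_lt hA) hp1)
  have hkey : ((2:ℝ)^(k-1))^(m-1) * (((2:ℝ)^(k-1))⁻¹)^m = ((2:ℝ)^(k-1))⁻¹ := by
    rw [show (((2:ℝ)^(k-1))⁻¹)^m = (((2:ℝ)^(k-1))⁻¹)^(m-1) * ((2:ℝ)^(k-1))⁻¹ from by
        rw [← pow_succ]; congr 1; omega,
      ← mul_assoc, ← mul_pow, mul_inv_cancel₀ hx0, one_pow, one_mul]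
  rw [ge_iff_le, ← hkey]
  exact hmul
end
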